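/- Let Σ be a signed graph whose underlying graph has degree sequence d₁ ≥ d₂ ≥ … ≥ dₙ. Then l(Σ) ≤ Σ_{i=1}^{l₀(Σ)} ⌊dᵢ/2⌋. -/

import Mathlib

open SimpleGraph
open scoped Classical

variable {V : Type*}

/-- The sign of a walk: the product of the signs of its edges. -/
def walkSign (σ : Sym2 V → ℤˣ) {G : SimpleGraph V} {u v : V} (w : G.Walk u v) : ℤˣ :=
  (w.edges.map σ).prod

/-- A signed graph is balanced if every cycle (circle) has positive sign. -/
def IsBalanced (G : SimpleGraph V) (σ : Sym2 V → ℤˣ) : Prop :=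
  ∀ (v : V) (w : G.Walk v v), w.IsCycle → walkSign σ w = 1

/-- The sign function induced on an induced subgraph. -/
def induceSign (σ : Sym2 V → ℤˣ) (X : Set V) : Sym2 ↥X → ℤˣ :=
  fun e => σ (e.map Subtype.val)

/-- Frustration index: minimum number of edges to delete to obtain balance. -/
noncomputable def frustrationIndex (G : SimpleGraph V) (σ : Sym2 V → ℤˣ) : ℕ :=
  sInf {n | ∃ s : Finset (Sym2 V), s.card = n ∧ IsBalanced (G.deleteEdges ↑s) σ}

/-- Frustration number: minimum number of vertices to delete to obtain balance. -/
noncomputable def frustrationNumber (G : SimpleGraph V) (σ : Sym2 V → ℤˣ) : ℕ :=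
  sInf {n | ∃ X : Finset V, X.card = n ∧
    IsBalanced (G.induce ((↑X : Set V)ᶜ)) (induceSign σ ((↑X : Set V)ᶜ))}

/-- The sign function obtained by switching at a vertex `v`:
negate the sign of every (non-loop) edge incident to `v`. -/
noncomputable def switchSign (σ : Sym2 V → ℤˣ) (v : V) : Sym2 V → ℤˣ :=
  fun e => if v ∈ e then -σ e else σ e

/-- `τ` is obtained from `σ` by switching at `v` (as signatures of `G`). -/
def SwitchedAt (G : SimpleGraph V) (σ τ : Sym2 V → ℤˣ) (v : V) : Prop :=
  ∀ e ∈ G.edgeSet, τ e = switchSign σ v e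

/-- Switching equivalence: related by a finite sequence of switchings. -/
def SwitchEquiv (G : SimpleGraph V) : (Sym2 V → ℤˣ) → (Sym2 V → ℤˣ) → Prop :=
  Relation.ReflTransGen (fun σ τ => ∃ v, SwitchedAt G σ τ v)

section AuxLemmas

variable {G : SimpleGraph V} {σ : Sym2 V → ℤˣ}

@[simp] lemma walkSign_nil' {u : V} : walkSign σ (Walk.nil : G.Walk u u) = 1 := rfl

lemma walkSign_cons' {u v w : V} (h : G.Adj u v) (p : G.Walk v w) :
    walkSign σ (Walk.cons h p) = σ s(u, v) * walkSign σ p := by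
  simp [walkSign]

lemma walkSign_append' {u v w : V} (p : G.Walk u v) (q : G.Walk v w) :
    walkSign σ (p.append q) = walkSign σ p * walkSign σ q := by
  simp [walkSign]

lemma walkSign_reverse' {u v : V} (p : G.Walk u v) :
    walkSign σ p.reverse = walkSign σ p := by
  simp [walkSign, Walk.edges_reverse, List.map_reverse, List.prod_reverse]

lemma walkSign_copy' {u v u' v' : V} (p : G.Walk u v) (hu : u = u') (hv : v = v') :
    walkSign σ (p.copy hu hv) = walkSign σ p := by
  subst hu hv; rfl

lemma walkSign_rotate' {v x : V} (c : G.Walk v v) (h : x ∈ c.support) :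
    walkSign σ (c.rotate x h) = walkSign σ c := by
  unfold walkSign
  exact List.Perm.prod_eq (((Walk.rotate_edges c x h).perm).map σ)

lemma walkSign_closed (hbal : IsBalanced G σ) :
    ∀ (n : ℕ) (v : V) (w : G.Walk v v), w.length ≤ n → walkSign σ w = 1 := by
  intro n
  induction n using Nat.strong_induction_on with
  | _ n IH =>
    intro v w hlen
    cases w with
    | nil => simp
    | @cons _ u _ h p =>
      by_cases hp : p.IsPath
      · by_cases he : s(v, u) ∈ p.edges
        · cases p with
          | nil => simp at he
          | @cons _ x _ h' q =>
            rw [Walk.edges_cons, List.mem_cons] at he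
            rcases he with he | he
            · rw [Sym2.eq_iff] at he
              rcases he with ⟨hvu, -⟩ | ⟨hvx, -⟩
              · exact absurd hvu h.ne
              · subst hvx
                have hq : q = Walk.nil := (Walk.isPath_iff_eq_nil (p := q)).mp hp.of_cons
                subst hq
                rw [walkSign_cons', walkSign_cons', walkSign_nil', mul_one,
                  Sym2.eq_swap (a := u) (b := v)]
                exact Int.units_mul_self _
            · exfalso
              have hu : u ∈ q.support := Walk.snd_mem_support_of_mem_edges q he
              have hnd := hp.support_nodup
              rw [Walk.support_cons] at hnd
              exact (List.nodup_cons.mp hnd).1 hu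
        · exact hbal v (Walk.cons h p) ((Walk.cons_isCycle_iff p h).mpr ⟨hp, he⟩)
      · rw [Walk.isPath_def] at hp
        obtain ⟨x, hx⟩ := List.exists_duplicate_iff_not_nodup.mpr hp
        have hxcount : 2 ≤ p.support.count x := List.duplicate_iff_two_le_count.mp hx
        have hxw : x ∈ (Walk.cons h p).support := by
          rw [Walk.support_cons]
          exact List.mem_cons_of_mem _ hx.mem
        set w₂ := (Walk.cons h p).rotate x hxw with hw₂
        have hsign : walkSign σ w₂ = walkSign σ (Walk.cons h p) := walkSign_rotate' _ _
        have hlen₂ : w₂.length = (Walk.cons h p).length := by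
          rw [← Walk.length_edges, ← Walk.length_edges]
          exact (Walk.rotate_edges _ x hxw).perm.length_eq
        have hcount₂ : 2 ≤ w₂.support.tail.count x := by
          have := (Walk.support_rotate (Walk.cons h p) x hxw).perm.count_eq x
          rw [this, Walk.support_cons, List.tail_cons]
          exact hxcount
        rw [← hsign]
        cases hw2e : w₂ with
        | nil => rw [hw2e] at hcount₂; simp at hcount₂
        | @cons _ y _ h₂ r =>
          rw [hw2e] at hcount₂ hlen₂
          rw [Walk.support_cons, List.tail_cons] at hcount₂
          have hxr : x ∈ r.support := List.count_pos_iff.mp (by omega)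
          have hspec := r.take_spec hxr
          have hcount_take : (r.takeUntil x hxr).support.count x = 1 :=
            r.count_support_takeUntil_eq_one hxr
          have hcount_drop : 1 ≤ (r.dropUntil x hxr).support.tail.count x := by
            have := congrArg (fun q => q.support.count x) hspec
            simp only [Walk.support_append, List.count_append] at this
            omega
          have hdroplen : 1 ≤ (r.dropUntil x hxr).length := by
            by_contra hcon
            push_neg at hcon
            interval_cases hlen' : (r.dropUntil x hxr).length
            · have hnil : (r.dropUntil x hxr).support.tail = [] := by
                have hls := (r.dropUntil x hxr).length_support
                cases hsupp : (r.dropUntil x hxr).support with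
                | nil => simp
                | cons a l =>
                  rw [hsupp] at hls
                  simp at hls
                  simp [List.length_eq_zero_iff.mp (by omega : l.length = 0)]
              rw [hnil] at hcount_drop
              simp at hcount_drop
          have hw2 : Walk.cons h₂ r
              = (Walk.cons h₂ (r.takeUntil x hxr)).append (r.dropUntil x hxr) := by
            conv_lhs => rw [← hspec]
            exact (Walk.cons_append _ _ _).symm
          rw [hw2, walkSign_append']
          have hlensum : (Walk.cons h₂ (r.takeUntil x hxr)).length + (r.dropUntil x hxr).length
              = (Walk.cons h₂ r).length := by
            rw [← Walk.length_append, ← hw2]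
          have h1 : (Walk.cons h₂ (r.takeUntil x hxr)).length < n := by
            have : 1 ≤ (Walk.cons h₂ r).length := by simp [Walk.length_cons]
            omega
          have h2 : (r.dropUntil x hxr).length < n := by
            have : 1 ≤ (Walk.cons h₂ (r.takeUntil x hxr)).length := by simp [Walk.length_cons]
            omega
          rw [IH _ h1 _ _ le_rfl, IH _ h2 _ _ le_rfl, mul_one]

lemma walkSign_of_potential {θ : V → ℤˣ}
    (hθ : ∀ a b, G.Adj a b → σ s(a, b) = θ a * θ b) :
    ∀ {u v : V} (w : G.Walk u v), walkSign σ w = θ u * θ v := by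
  intro u v w
  induction w with
  | nil => rw [walkSign_nil', Int.units_mul_self]
  | @cons a b c h p ih =>
    rw [walkSign_cons', hθ _ _ h, ih, mul_assoc, ← mul_assoc (θ b), Int.units_mul_self, one_mul]

lemma isBalanced_of_potential {θ : V → ℤˣ}
    (hθ : ∀ a b, G.Adj a b → σ s(a, b) = θ a * θ b) : IsBalanced G σ := by
  intro v w _
  rw [walkSign_of_potential hθ, Int.units_mul_self]

lemma exists_potential (hbal : IsBalanced G σ) :
    ∃ θ : V → ℤˣ, ∀ a b, G.Adj a b → σ s(a, b) = θ a * θ b := by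
  have hreach : ∀ w : V, G.Reachable (G.connectedComponentMk w).out w := by
    intro w
    exact ConnectedComponent.exact (Quot.out_eq _)
  refine ⟨fun w => walkSign σ (hreach w).some, ?_⟩
  intro a b hab
  have hcomp : G.connectedComponentMk a = G.connectedComponentMk b :=
    ConnectedComponent.sound hab.reachable
  set r := (G.connectedComponentMk a).out with hr
  set p := (hreach a).some with hpdef
  set q := (hreach b).some with hqdef
  have hout : (G.connectedComponentMk b).out = r := by rw [hr, hcomp]
  let q' : G.Walk r b := q.copy hout rfl
  have hq' : walkSign σ q' = walkSign σ q := walkSign_copy' _ _ _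
  have hclosed : walkSign σ (p.append ((Walk.cons hab q'.reverse))) = 1 :=
    walkSign_closed hbal _ r _ le_rfl
  rw [walkSign_append', walkSign_cons', walkSign_reverse', hq'] at hclosed
  set P := walkSign σ p
  set Q := walkSign σ q
  show σ s(a, b) = P * Q
  rcases Int.units_eq_one_or P with hP | hP <;>
    rcases Int.units_eq_one_or Q with hQ | hQ <;>
      rcases Int.units_eq_one_or (σ s(a, b)) with hE | hE <;>
        rw [hP, hQ, hE] at hclosed ⊢ <;> simp_all

lemma sum_le_sum_range {g : ℕ → ℕ} (hg : ∀ i j, i ≤ j → g j ≤ g i) :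
    ∀ (k : ℕ) (S : Finset ℕ), S.card = k → ∑ i ∈ S, g i ≤ ∑ i ∈ Finset.range k, g i := by
  intro k
  induction k with
  | zero => intro S hS; simp [Finset.card_eq_zero.mp hS]
  | succ k ih =>
    intro S hS
    have hne : S.Nonempty := Finset.card_pos.mp (by omega)
    set m := S.max' hne with hm
    have hmem : m ∈ S := S.max'_mem hne
    have hcard : (S.erase m).card = k := by rw [Finset.card_erase_of_mem hmem, hS]; omega
    have hkm : k ≤ m := by
      have hsub : S ⊆ Finset.range (m + 1) := fun i hi =>
        Finset.mem_range.mpr (Nat.lt_succ_of_le (S.le_max' i hi))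
      have := Finset.card_le_card hsub
      rw [hS, Finset.card_range] at this
      omega
    calc ∑ i ∈ S, g i = g m + ∑ i ∈ S.erase m, g i :=
          (Finset.add_sum_erase S g hmem).symm
      _ ≤ g k + ∑ i ∈ Finset.range k, g i :=
          Nat.add_le_add (hg k m hkm) (ih _ hcard)
      _ = ∑ i ∈ Finset.range (k + 1), g i := by
          rw [Finset.sum_range_succ, add_comm]

lemma neg_unit_ne_iff (s t : ℤˣ) : s = -t ↔ ¬ s = t := by
  rcases Int.units_eq_one_or s with hs | hs <;>
    rcases Int.units_eq_one_or t with ht | ht <;> subst hs ht <;> decide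

end AuxLemmas

/-- If the degree sequence of the underlying graph is d₀ ≥ d₁ ≥ …, then
l(Σ) ≤ ∑_{i < l₀(Σ)} ⌊dᵢ/2⌋. -/
theorem frustrationIndex_le_sum_half_degrees {V : Type*} [Fintype V]
    (G : SimpleGraph V) [DecidableRel G.Adj] (σ : Sym2 V → ℤˣ)
    (d : ℕ → ℕ) (e : V ≃ Fin (Fintype.card V))
    (hd : ∀ v : V, G.degree v = d (e v))
    (hmono : ∀ i j : ℕ, i ≤ j → d j ≤ d i) :
    frustrationIndex G σ ≤ ∑ i ∈ Finset.range (frustrationNumber G σ), d i / 2 := by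
  classical
  -- obtain a minimum balancing vertex set
  have hSne : {n | ∃ X : Finset V, X.card = n ∧
      IsBalanced (G.induce ((↑X : Set V)ᶜ)) (induceSign σ ((↑X : Set V)ᶜ))}.Nonempty := by
    refine ⟨(Finset.univ : Finset V).card, Finset.univ, rfl, ?_⟩
    intro v
    exact absurd v.2 (by simp)
  obtain ⟨X, hXcard, hXbal⟩ := Nat.sInf_mem hSne
  have hfr : frustrationNumber G σ = X.card := hXcard.symm
  obtain ⟨θ₀, hθ₀⟩ := exists_potential hXbal
  set pot : (V → ℤˣ) → Sym2 V → ℤˣ :=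
    fun θ => Sym2.lift ⟨fun a b => θ a * θ b, fun a b => mul_comm _ _⟩ with hpot
  have potpair : ∀ (θ' : V → ℤˣ) (a b : V), pot θ' s(a, b) = θ' a * θ' b := by
    intro θ' a b; simp [hpot]
  set P : (V → ℤˣ) → Prop :=
    fun θ => ∀ a b : V, a ∉ X → b ∉ X → G.Adj a b → σ s(a, b) = θ a * θ b with hP
  set Bad : (V → ℤˣ) → Finset (Sym2 V) :=
    fun θ => G.edgeFinset.filter (fun e => ¬ σ e = pot θ e) with hBad
  set Inc : V → Finset (Sym2 V) :=
    fun x => G.edgeFinset.filter (fun e => x ∈ e) with hInc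
  have hIcard : ∀ x : V, (Inc x).card = G.degree x := by
    intro x
    rw [hInc]
    show (G.edgeFinset.filter (fun e => x ∈ e)).card = G.degree x
    rw [← incidenceFinset_eq_filter, card_incidenceFinset_eq_degree]
  -- a potential valid outside X exists
  have hP₁ : P (fun v => if h : v ∈ ((↑X : Set V)ᶜ) then θ₀ ⟨v, h⟩ else 1) := by
    intro a b ha hb hab
    have ha' : a ∈ ((↑X : Set V)ᶜ) := by simp [ha]
    have hb' : b ∈ ((↑X : Set V)ᶜ) := by simp [hb]
    have := hθ₀ ⟨a, ha'⟩ ⟨b, hb'⟩ (by simpa using hab)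
    simpa [induceSign, Sym2.map_pair_eq, ha', hb'] using this
  -- choose a potential minimizing the number of bad edges
  have hTne : {n | ∃ θ, P θ ∧ (Bad θ).card = n}.Nonempty := ⟨_, _, hP₁, rfl⟩
  obtain ⟨θ, hPθ, hθcard⟩ := Nat.sInf_mem hTne
  have hmin : ∀ θ', P θ' → (Bad θ).card ≤ (Bad θ').card := by
    intro θ' h
    rw [hθcard]
    exact Nat.sInf_le ⟨θ', h, rfl⟩
  -- per-vertex bound on bad edges
  have hvert : ∀ x ∈ X, 2 * (Bad θ ∩ Inc x).card ≤ G.degree x := by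
    intro x hxX
    set θ' : V → ℤˣ := fun v => if v = x then -θ v else θ v with hθ'
    have hPθ' : P θ' := by
      intro a b ha hb hab
      have hax : a ≠ x := fun h => ha (h ▸ hxX)
      have hbx : b ≠ x := fun h => hb (h ▸ hxX)
      simp only [hθ', if_neg hax, if_neg hbx]
      exact hPθ a b ha hb hab
    have hflip : ∀ e ∈ G.edgeFinset, x ∈ e → pot θ' e = - pot θ e := by
      intro e he hxe
      induction e using Sym2.ind with
      | _ a b =>
        have hadj : G.Adj a b := (SimpleGraph.mem_edgeSet G).mp (mem_edgeFinset.mp he)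
        rw [Sym2.mem_iff] at hxe
        rw [potpair, potpair]
        rcases hxe with rfl | rfl
        · simp [hθ', Ne.symm hadj.ne, neg_mul]
        · simp [hθ', hadj.ne, mul_neg]
    have hsame : ∀ e ∈ G.edgeFinset, x ∉ e → pot θ' e = pot θ e := by
      intro e he hxe
      induction e using Sym2.ind with
      | _ a b =>
        rw [Sym2.mem_iff] at hxe
        push_neg at hxe
        rw [potpair, potpair]
        simp [hθ', Ne.symm hxe.1, Ne.symm hxe.2]
    have hBad' : Bad θ' = (Bad θ \ Inc x) ∪ (Inc x \ Bad θ) := by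
      ext e
      simp only [hBad, hInc, Finset.mem_filter, Finset.mem_sdiff, Finset.mem_union]
      by_cases he : e ∈ G.edgeFinset
      · by_cases hxe : x ∈ e
        · have hiff : (¬ σ e = pot θ' e) ↔ (σ e = pot θ e) := by
            rw [hflip e he hxe, ← neg_unit_ne_iff, neg_neg]
          tauto
        · have h1 : pot θ' e = pot θ e := hsame e he hxe
          rw [h1]
          tauto
      · tauto
    have hdisj : Disjoint (Bad θ \ Inc x) (Inc x \ Bad θ) := disjoint_sdiff_sdiff
    have hcard' : (Bad θ').card = (Bad θ \ Inc x).card + (Inc x \ Bad θ).card := by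
      rw [hBad', Finset.card_union_of_disjoint hdisj]
    have h1 : (Bad θ ∩ Inc x).card + (Bad θ \ Inc x).card = (Bad θ).card :=
      Finset.card_inter_add_card_sdiff (Bad θ) (Inc x)
    have h2 : (Inc x ∩ Bad θ).card + (Inc x \ Bad θ).card = (Inc x).card :=
      Finset.card_inter_add_card_sdiff (Inc x) (Bad θ)
    have hle := hmin θ' hPθ'
    rw [Finset.inter_comm] at h2
    rw [← hIcard x]
    omega
  -- every bad edge touches X
  have hcover : Bad θ ⊆ X.biUnion (fun x => Bad θ ∩ Inc x) := by
    intro ed hed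
    have hed' := hed
    rw [hBad, Finset.mem_filter] at hed'
    obtain ⟨hee, hbad⟩ := hed'
    have hxe : ∃ x ∈ X, x ∈ ed := by
      clear hed
      revert hee hbad
      induction ed using Sym2.ind with
      | _ a b =>
        intro hee hbad
        by_contra hcon
        push_neg at hcon
        have ha : a ∉ X := fun h => hcon a h (Sym2.mem_mk_left a b)
        have hb : b ∉ X := fun h => hcon b h (Sym2.mem_mk_right a b)
        exact hbad (by
          rw [potpair]
          exact hPθ a b ha hb ((SimpleGraph.mem_edgeSet G).mp (mem_edgeFinset.mp hee)))
    obtain ⟨x, hxX, hxe⟩ := hxe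
    exact Finset.mem_biUnion.mpr
      ⟨x, hxX, Finset.mem_inter.mpr ⟨hed, Finset.mem_filter.mpr ⟨hee, hxe⟩⟩⟩
  -- count
  have hbound : (Bad θ).card ≤ ∑ x ∈ X, G.degree x / 2 :=
    calc (Bad θ).card ≤ (X.biUnion (fun x => Bad θ ∩ Inc x)).card := Finset.card_le_card hcover
      _ ≤ ∑ x ∈ X, (Bad θ ∩ Inc x).card := Finset.card_biUnion_le
      _ ≤ ∑ x ∈ X, G.degree x / 2 := Finset.sum_le_sum (fun x hx =>
          (Nat.le_div_iff_mul_le two_pos).mpr (by rw [mul_comm]; exact hvert x hx))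
  have hinj : Function.Injective (fun x : V => ((e x : Fin (Fintype.card V)) : ℕ)) :=
    Fin.val_injective.comp e.injective
  have himg : ∑ i ∈ X.image (fun x => ((e x : Fin (Fintype.card V)) : ℕ)), d i / 2
      = ∑ x ∈ X, G.degree x / 2 := by
    rw [Finset.sum_image (fun a _ b _ hab => hinj hab)]
    exact Finset.sum_congr rfl (fun x _ => by rw [hd x])
  have himgcard : (X.image (fun x => ((e x : Fin (Fintype.card V)) : ℕ))).card = X.card :=
    Finset.card_image_of_injective X hinj
  have hsum : ∑ i ∈ X.image (fun x => ((e x : Fin (Fintype.card V)) : ℕ)), d i / 2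
      ≤ ∑ i ∈ Finset.range X.card, d i / 2 :=
    sum_le_sum_range (fun i j hij => Nat.div_le_div_right (hmono i j hij)) X.card _ himgcard
  -- the deleted graph is balanced
  have hbal2 : IsBalanced (G.deleteEdges ↑(Bad θ)) σ := by
    apply isBalanced_of_potential (θ := θ)
    intro a b hab
    rw [deleteEdges_adj] at hab
    obtain ⟨hadj, hnb⟩ := hab
    by_contra hcon
    refine hnb (Finset.mem_coe.mpr (Finset.mem_filter.mpr ⟨mem_edgeFinset.mpr hadj, ?_⟩))
    rw [potpair]
    exact hcon
  have hfinal : frustrationIndex G σ ≤ (Bad θ).card :=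
    Nat.sInf_le ⟨Bad θ, rfl, hbal2⟩
  rw [hfr]
  omega
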